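/- arXiv:1309.7168 — 3 statements merged into one kernel-verified Lean document; each statement's English description precedes it below -/
import Mathlib

section
/- If μ(t) and A(t) satisfy μ'(t) = A(t)A(t)ᵀ J_μ and A'(t) = ½ (J_Σ − J_μ μ(t)ᵀ)ᵀ A(t), and if additionally Σ(t)(J_Σ − J_μ μ(t)ᵀ) is symmetric for all t where Σ(t) = A(t)A(t)ᵀ, then Σ'(t) = Σ(t) J_Σ − μ'(t) μ(t)ᵀ. -/
open Matrix

/-! Under GIGO-A, `A' Aᵀ = ½ Bᵀ Σ = ½ (Σ B)ᵀ` with `B = J_Σ − J_μ μᵀ`, so the symmetry hypothesis makes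
both halves of the product rule `Σ' = A' Aᵀ + A A'ᵀ` equal to `½ Σ B`. Hence
`Σ' = Σ B = Σ J_Σ − (Σ J_μ) μᵀ = Σ J_Σ − μ' μᵀ`. -/

theorem Matrix.hasDerivAt_mul_apply {𝕜 : Type*} [NontriviallyNormedField 𝕜]
    {l m n : Type*} [Fintype m] {A : 𝕜 → Matrix l m 𝕜} {B : 𝕜 → Matrix m n 𝕜}
    {A' : Matrix l m 𝕜} {B' : Matrix m n 𝕜} {t : 𝕜}
    (hA : ∀ i j, HasDerivAt (fun s => A s i j) (A' i j) t)
    (hB : ∀ i j, HasDerivAt (fun s => B s i j) (B' i j) t) (i : l) (k : n) :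
    HasDerivAt (fun s => (A s * B s) i k) ((A' * B t + A t * B') i k) t := by
  simp only [mul_apply, add_apply, ← Finset.sum_add_distrib]
  exact HasDerivAt.fun_sum fun j _ => (hA i j).mul (hB j k)

theorem Matrix.smul_mul_transpose_add_mul_transpose_smul {R : Type*} [CommRing R]
    {m n : Type*} [Fintype m] [Fintype n] (A : Matrix m n R) (B : Matrix m m R) (c : R)
    (hsymm : (A * Aᵀ * B)ᵀ = A * Aᵀ * B) :
    c • (Bᵀ * A) * Aᵀ + A * (c • (Bᵀ * A))ᵀ = (2 * c) • (A * Aᵀ * B) := by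
  have hleft : Bᵀ * A * Aᵀ = A * Aᵀ * B := by
    rw [← hsymm, transpose_mul, transpose_mul, transpose_transpose, Matrix.mul_assoc]
  rw [transpose_smul, transpose_mul, transpose_transpose, Matrix.smul_mul, Matrix.mul_smul,
    hleft, ← Matrix.mul_assoc, two_mul, add_smul]

theorem gigoA_implies_gigoSigma_general
    (d : ℕ)
    (μ μ' : ℝ → Matrix (Fin d) (Fin 1) ℝ)
    (A A' : ℝ → Matrix (Fin d) (Fin d) ℝ)
    (Jμ : Matrix (Fin d) (Fin 1) ℝ) (JSig : Matrix (Fin d) (Fin d) ℝ)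
    (hAdiff : ∀ (t : ℝ) (i j : Fin d),
      HasDerivAt (fun s => A s i j) (A' t i j) t)
    (heqμ : ∀ t : ℝ, μ' t = A t * (A t)ᵀ * Jμ)
    (heqA : ∀ t : ℝ, A' t = (1 / 2 : ℝ) • ((JSig - Jμ * (μ t)ᵀ)ᵀ * A t))
    (hsymm : ∀ t : ℝ,
      (A t * (A t)ᵀ * (JSig - Jμ * (μ t)ᵀ))ᵀ = A t * (A t)ᵀ * (JSig - Jμ * (μ t)ᵀ)) :
    ∀ (t : ℝ) (i j : Fin d),
      HasDerivAt (fun s => (A s * (A s)ᵀ) i j)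
        ((A t * (A t)ᵀ * JSig - μ' t * (μ t)ᵀ) i j) t := by
  intro t i j
  have hproduct : A' t * (A t)ᵀ + A t * (A' t)ᵀ = A t * (A t)ᵀ * JSig - μ' t * (μ t)ᵀ := by
    rw [heqA t, smul_mul_transpose_add_mul_transpose_smul _ _ _ (hsymm t), heqμ t]
    norm_num [mul_sub, Matrix.mul_assoc]
  rw [← hproduct]
  exact hasDerivAt_mul_apply (hAdiff t) (fun k l => hAdiff t l k) i j

/-- GIGO-A implies GIGO-Σ: if `μ' = AAᵀ J_μ` and `A' = ½ (J_Σ − J_μ μᵀ)ᵀ A`, and if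
`Sig (J_Σ − J_μ μᵀ)` is symmetric where `Sig = AAᵀ`, then `Sig' = Sig J_Σ − μ' μᵀ`, i.e. the
derivative of `AAᵀ` is `A'Aᵀ + A(A')ᵀ = Sig J_Σ − μ' μᵀ`. -/
theorem gigoA_implies_gigoSigma
    (d : ℕ)
    (μ μ' : ℝ → Matrix (Fin d) (Fin 1) ℝ)
    (A A' : ℝ → Matrix (Fin d) (Fin d) ℝ)
    (Jμ : Matrix (Fin d) (Fin 1) ℝ) (JSig : Matrix (Fin d) (Fin d) ℝ)
    (hμdiff : ∀ (t : ℝ) (i : Fin d) (j : Fin 1),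
      HasDerivAt (fun s => μ s i j) (μ' t i j) t)
    (hAdiff : ∀ (t : ℝ) (i j : Fin d),
      HasDerivAt (fun s => A s i j) (A' t i j) t)
    (heqμ : ∀ t : ℝ, μ' t = A t * (A t)ᵀ * Jμ)
    (heqA : ∀ t : ℝ, A' t = (1 / 2 : ℝ) • ((JSig - Jμ * (μ t)ᵀ)ᵀ * A t))
    (hsymm : ∀ t : ℝ,
      (A t * (A t)ᵀ * (JSig - Jμ * (μ t)ᵀ))ᵀ = A t * (A t)ᵀ * (JSig - Jμ * (μ t)ᵀ)) :
    ∀ (t : ℝ) (i j : Fin d),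
      HasDerivAt (fun s => (A s * (A s)ᵀ) i j)
        ((A t * (A t)ᵀ * JSig - μ' t * (μ t)ᵀ) i j) t :=
  gigoA_implies_gigoSigma_general d μ μ' A A' Jμ JSig hAdiff heqμ heqA hsymm
end

section
/- The second-order Taylor expansion of the xNES covariance update: for Σ = AAᵀ invertible and v_Σ symmetric, the curve Σ_xNES(t) = A exp(t A⁻¹ v_Σ (A⁻¹)ᵀ) Aᵀ satisfies Σ_xNES(0) = Σ, Σ_xNES'(0) = v_Σ, and Σ_xNES''(0) = v_Σ Σ⁻¹ v_Σ. -/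
/-! With `B = A⁻¹ v_Σ (A⁻¹)ᵀ`, the curve is `t ↦ A exp(tB) Aᵀ`, and since `exp(tB)` has
derivative `exp(tB) B`, its `k`-th derivative at `0` is `A Bᵏ Aᵀ`. For `k = 1` the factors
`A⁻¹` cancel to give `v_Σ`; for `k = 2`, `A B² Aᵀ = (A B Aᵀ) (A Aᵀ)⁻¹ (A B Aᵀ) = v_Σ Σ⁻¹ v_Σ`. -/

open Matrix

section ExpCurve

variable {𝕂 𝔸 : Type*} [RCLike 𝕂] [NormedRing 𝔸] [NormedAlgebra 𝕂 𝔸] [CompleteSpace 𝔸]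

theorem hasDerivAt_mul_exp_smul_mul (a b c : 𝔸) (t : 𝕂) :
    HasDerivAt (fun s : 𝕂 => a * NormedSpace.exp (s • b) * c)
      (a * NormedSpace.exp (t • b) * b * c) t := by
  simpa only [mul_assoc] using ((hasDerivAt_exp_smul_const b t).const_mul a).mul_const c

end ExpCurve

section MatrixExpCurve

attribute [local instance] Matrix.linftyOpNormedAddCommGroup Matrix.linftyOpNormedRing
  Matrix.linftyOpNormedAlgebra

variable {𝕂 m : Type*} [RCLike 𝕂] [Fintype m] [DecidableEq m]

theorem deriv_mul_exp_smul_mul_apply (a b c : Matrix m m 𝕂) (i j : m) :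
    deriv (fun s : 𝕂 => (a * NormedSpace.exp (s • b) * c) i j)
      = fun t => (a * NormedSpace.exp (t • b) * b * c) i j :=
  funext fun t =>
    ((entryLinearMap 𝕂 𝕂 i j).toContinuousLinearMap.hasFDerivAt.comp_hasDerivAt t
      (hasDerivAt_mul_exp_smul_mul a b c t)).deriv

end MatrixExpCurve

section Congruence

variable {R n : Type*} [CommRing R] [Fintype n] [DecidableEq n]

theorem mul_inv_mul_mul_inv_transpose_mul_transpose {A : Matrix n n R} (hA : IsUnit A.det)
    (v : Matrix n n R) : A * (A⁻¹ * v * (A⁻¹)ᵀ) * Aᵀ = v := by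
  have hAt : IsUnit Aᵀ.det := by rwa [det_transpose]
  rw [transpose_nonsing_inv, mul_assoc, mul_assoc, nonsing_inv_mul _ hAt, mul_one,
    mul_nonsing_inv_cancel_left _ _ hA]

theorem mul_mul_self_mul_transpose {A : Matrix n n R} (hA : IsUnit A.det) (X : Matrix n n R) :
    A * X * X * Aᵀ = A * X * Aᵀ * (A * Aᵀ)⁻¹ * (A * X * Aᵀ) := by
  have hAt : IsUnit Aᵀ.det := by rwa [det_transpose]
  rw [Matrix.mul_inv_rev]
  simp only [mul_assoc, mul_nonsing_inv_cancel_left _ _ hAt, nonsing_inv_mul_cancel_left _ _ hA]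

end Congruence

theorem xnes_covariance_taylor_general
    (d : ℕ) (A vSig : Matrix (Fin d) (Fin d) ℝ)
    (hA : IsUnit A.det)
    (SigX : ℝ → Matrix (Fin d) (Fin d) ℝ)
    (hSigX : ∀ t : ℝ, SigX t = A * NormedSpace.exp (t • (A⁻¹ * vSig * (A⁻¹)ᵀ)) * Aᵀ) :
    SigX 0 = A * Aᵀ ∧
    (∀ i j : Fin d, deriv (fun t => SigX t i j) 0 = vSig i j) ∧
    (∀ i j : Fin d, deriv (deriv (fun t => SigX t i j)) 0
      = (vSig * (A * Aᵀ)⁻¹ * vSig) i j) := by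
  set B := A⁻¹ * vSig * (A⁻¹)ᵀ
  have hB : A * B * Aᵀ = vSig := mul_inv_mul_mul_inv_transpose_mul_transpose hA vSig
  obtain rfl : SigX = fun t => A * NormedSpace.exp (t • B) * Aᵀ := funext hSigX
  refine ⟨by simp, fun i j => ?_, fun i j => ?_⟩
  · simp [deriv_mul_exp_smul_mul_apply, hB]
  · simp_rw [deriv_mul_exp_smul_mul_apply, mul_assoc _ B Aᵀ, deriv_mul_exp_smul_mul_apply]
    simp [← mul_assoc, mul_mul_self_mul_transpose hA B, hB]

/-- Second-order expansion of the xNES covariance update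
`Σ_xNES(t) = A exp(t A⁻¹ v_Σ (A⁻¹)ᵀ) Aᵀ`: its value, first and second derivatives at `0`
are `Σ = AAᵀ`, `v_Σ`, and `v_Σ Σ⁻¹ v_Σ`. -/
theorem xnes_covariance_taylor
    (d : ℕ) (A vSig : Matrix (Fin d) (Fin d) ℝ)
    (hA : IsUnit A.det) (hv : vSigᵀ = vSig)
    (SigX : ℝ → Matrix (Fin d) (Fin d) ℝ)
    (hSigX : ∀ t : ℝ, SigX t = A * NormedSpace.exp (t • (A⁻¹ * vSig * (A⁻¹)ᵀ)) * Aᵀ) :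
    SigX 0 = A * Aᵀ ∧
    (∀ i j : Fin d, deriv (fun t => SigX t i j) 0 = vSig i j) ∧
    (∀ i j : Fin d, deriv (deriv (fun t => SigX t i j)) 0
      = (vSig * (A * Aᵀ)⁻¹ * vSig) i j) :=
  xnes_covariance_taylor_general d A vSig hA SigX hSigX
end

section
/- Let f(x) = e^{vx}(c² + d²)/(c² e^{2vx} + d²) with c, d > 0 and v > 0. Then f(0) = 1, f is strictly increasing on (0, x*] and strictly decreasing on [x*, ∞) where e^{vx*} = d/c, f(x) → 0 as x → ∞, and there is a unique x_cr > 0 with f(x_cr) = 1 when d > c, given by e^{v x_cr} = d²/c²; moreover f(x) > 1 for 0 < x < x_cr and f(x) < 1 for x > x_cr. -/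
/-!
Writing `t = e^{vx}`, the factor is `g(t) = t(c² + d²)/(c²t² + d²)`, and the identity
`g(b) - g(a) = (c² + d²)(b - a)(d² - abc²) / ((c²a² + d²)(c²b² + d²))` shows that for `a < b` the
comparison of `g(a)` and `g(b)` is decided by the sign of `d² - abc²`. Taking `a, b ≤ d/c`, resp.
`a, b ≥ d/c`, gives the monotonicity; taking `a = 1` (where `g = 1`) locates `g(b)` relative to `1`
according to `c²b ≶ d²`, i.e. `b ≶ d²/c²`. Since `x ↦ e^{vx}` is strictly increasing, everything
transfers to `f`.
-/

open Filter Topology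

noncomputable def varianceFactor (c d t : ℝ) : ℝ :=
  t * (c ^ 2 + d ^ 2) / (c ^ 2 * t ^ 2 + d ^ 2)

namespace varianceFactor

variable {c d : ℝ}

theorem apply_one (h : c ^ 2 + d ^ 2 ≠ 0) : varianceFactor c d 1 = 1 := by
  simp [varianceFactor, h]

theorem apply_sq_div_sq (hc : c ≠ 0) (hd : d ≠ 0) : varianceFactor c d (d ^ 2 / c ^ 2) = 1 := by
  rw [varianceFactor, div_eq_one_iff_eq (by positivity)]
  field_simp
  ring

theorem sub_eq {a b : ℝ} (ha : c ^ 2 * a ^ 2 + d ^ 2 ≠ 0) (hb : c ^ 2 * b ^ 2 + d ^ 2 ≠ 0) :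
    varianceFactor c d b - varianceFactor c d a =
      (c ^ 2 + d ^ 2) * (b - a) * (d ^ 2 - a * b * c ^ 2) /
        ((c ^ 2 * a ^ 2 + d ^ 2) * (c ^ 2 * b ^ 2 + d ^ 2)) := by
  unfold varianceFactor
  rw [div_sub_div _ _ hb ha, mul_comm (c ^ 2 * b ^ 2 + d ^ 2)]
  ring

theorem lt_of_mul_lt {a b : ℝ} (ha : 0 < a) (hab : a < b) (h : a * b * c ^ 2 < d ^ 2) :
    varianceFactor c d a < varianceFactor c d b := by
  have hd : 0 < d ^ 2 :=
    lt_of_le_of_lt (mul_nonneg (mul_pos ha (ha.trans hab)).le (sq_nonneg c)) h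
  have hda : 0 < c ^ 2 * a ^ 2 + d ^ 2 := add_pos_of_nonneg_of_pos (by positivity) hd
  have hdb : 0 < c ^ 2 * b ^ 2 + d ^ 2 := add_pos_of_nonneg_of_pos (by positivity) hd
  rw [← sub_pos, sub_eq hda.ne' hdb.ne']
  exact div_pos (mul_pos (mul_pos (add_pos_of_nonneg_of_pos (sq_nonneg c) hd) (sub_pos.2 hab))
    (sub_pos.2 h)) (mul_pos hda hdb)

theorem lt_of_lt_mul {a b : ℝ} (ha : 0 < a) (hab : a < b) (h : d ^ 2 < a * b * c ^ 2) :
    varianceFactor c d b < varianceFactor c d a := by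
  have hc : 0 < c ^ 2 :=
    pos_of_mul_pos_right (lt_of_le_of_lt (sq_nonneg d) h) (mul_pos ha (ha.trans hab)).le
  have hda : 0 < c ^ 2 * a ^ 2 + d ^ 2 :=
    add_pos_of_pos_of_nonneg (mul_pos hc (pow_pos ha 2)) (sq_nonneg d)
  have hdb : 0 < c ^ 2 * b ^ 2 + d ^ 2 :=
    add_pos_of_pos_of_nonneg (mul_pos hc (pow_pos (ha.trans hab) 2)) (sq_nonneg d)
  rw [← sub_pos, sub_eq hdb.ne' hda.ne', mul_comm b a]
  exact div_pos (mul_pos_of_neg_of_neg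
    (mul_neg_of_pos_of_neg (add_pos_of_pos_of_nonneg hc (sq_nonneg d)) (sub_neg.2 hab))
    (sub_neg.2 h)) (mul_pos hdb hda)

theorem strictMonoOn (hc : 0 < c) : StrictMonoOn (varianceFactor c d) (Set.Ioc 0 (d / c)) := by
  intro a ha b hb hab
  refine lt_of_mul_lt ha.1 hab ?_
  calc a * b * c ^ 2 < (d / c) * (d / c) * c ^ 2 :=
        mul_lt_mul_of_pos_right (mul_lt_mul (hab.trans_le hb.2) hb.2 (ha.1.trans hab)
          (ha.1.trans_le ha.2).le) (by positivity)
    _ = d ^ 2 := by field_simp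

theorem strictAntiOn (hc : 0 < c) (hd : 0 < d) :
    StrictAntiOn (varianceFactor c d) (Set.Ici (d / c)) := by
  intro a (ha : d / c ≤ a) b _ hab
  have ha_pos : 0 < a := (div_pos hd hc).trans_le ha
  refine lt_of_lt_mul ha_pos hab ?_
  calc d ^ 2 = (d / c) * (d / c) * c ^ 2 := by field_simp
    _ < a * b * c ^ 2 :=
        mul_lt_mul_of_pos_right (mul_lt_mul' ha (ha.trans_lt hab) (div_pos hd hc).le ha_pos)
          (by positivity)

theorem one_lt {t : ℝ} (hc : c ≠ 0) (ht : 1 < t) (h : t < d ^ 2 / c ^ 2) :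
    1 < varianceFactor c d t := by
  rw [lt_div_iff₀ (by positivity)] at h
  simpa [apply_one (c := c) (d := d) (by positivity)] using
    lt_of_mul_lt (c := c) (d := d) one_pos ht (by rwa [one_mul])

theorem lt_one {t : ℝ} (hc : c ≠ 0) (ht : 1 < t) (h : d ^ 2 / c ^ 2 < t) :
    varianceFactor c d t < 1 := by
  rw [div_lt_iff₀ (by positivity)] at h
  simpa [apply_one (c := c) (d := d) (by positivity)] using
    lt_of_lt_mul (c := c) (d := d) one_pos ht (by rwa [one_mul])

theorem eq_sq_div_sq_of_eq_one {t : ℝ} (hc : c ≠ 0) (ht : 1 < t) (h : varianceFactor c d t = 1) :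
    t = d ^ 2 / c ^ 2 := by
  rcases lt_trichotomy t (d ^ 2 / c ^ 2) with hlt | heq | hgt
  · exact absurd h (one_lt hc ht hlt).ne'
  · exact heq
  · exact absurd h (lt_one hc ht hgt).ne

theorem tendsto_atTop_zero (hc : c ≠ 0) : Tendsto (varianceFactor c d) atTop (𝓝 0) := by
  have hden : Tendsto (fun t : ℝ => c ^ 2 * t + d ^ 2 / t) atTop atTop :=
    (tendsto_id.const_mul_atTop (by positivity)).atTop_add
      (tendsto_const_nhds.div_atTop tendsto_id)
  refine (tendsto_const_nhds (x := c ^ 2 + d ^ 2)).div_atTop hden |>.congr' ?_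
  filter_upwards [eventually_gt_atTop 0] with t ht
  unfold varianceFactor
  field_simp

end varianceFactor

/-- Properties of the per-step variance factor `f(x) = e^{vx}(c²+d²)/(c²e^{2vx}+d²)` of GIGO on
a linear function: `f(0) = 1`; `f` increases up to `x* = log(d/c)/v`, decreases afterwards,
tends to `0` at `∞`; and when `d > c` there is a unique critical `x_cr > 0` with `f(x_cr) = 1`,
given by `e^{v x_cr} = d²/c²`, with `f > 1` before it and `f < 1` after it. -/
theorem gigo_linear_critical_step_size
    (c d v : ℝ) (hc : 0 < c) (hcd : c < d) (hv : 0 < v)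
    (f : ℝ → ℝ)
    (hf : ∀ x : ℝ, f x = Real.exp (v * x) * (c ^ 2 + d ^ 2) /
                          (c ^ 2 * Real.exp (v * x) ^ 2 + d ^ 2))
    (xs xcr : ℝ) (hxs : xs = Real.log (d / c) / v) (hxcr : xcr = 2 * Real.log (d / c) / v) :
    f 0 = 1 ∧
    Real.exp (v * xs) = d / c ∧
    StrictMonoOn f (Set.Icc 0 xs) ∧
    StrictAntiOn f (Set.Ici xs) ∧
    Tendsto f atTop (𝓝 0) ∧
    0 < xcr ∧
    Real.exp (v * xcr) = d ^ 2 / c ^ 2 ∧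
    f xcr = 1 ∧
    (∀ x : ℝ, 0 < x → f x = 1 → x = xcr) ∧
    (∀ x : ℝ, 0 < x → x < xcr → 1 < f x) ∧
    (∀ x : ℝ, xcr < x → f x < 1) := by
  set e : ℝ → ℝ := fun x => Real.exp (v * x) with he_def
  have hfe : f = varianceFactor c d ∘ e := funext hf
  have he : StrictMono e := Real.exp_strictMono.comp (strictMono_mul_left_of_pos hv)
  have he_one : ∀ x, 0 < x → 1 < e x := fun x hx => by simpa [he_def] using he hx
  have hd : 0 < d := hc.trans hcd
  have hexs : e xs = d / c := by
    simp only [he_def, hxs, mul_div_cancel₀ _ hv.ne', Real.exp_log (div_pos hd hc)]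
  have hexcr : e xcr = d ^ 2 / c ^ 2 := by
    have hxcr_eq : v * xcr = v * xs + v * xs := by rw [hxcr, hxs]; ring
    rw [← div_pow, ← hexs, sq, ← Real.exp_add, ← hxcr_eq]
  have hxcr_pos : 0 < xcr := by
    rw [hxcr]
    exact div_pos (mul_pos two_pos (Real.log_pos ((one_lt_div hc).2 hcd))) hv
  refine ⟨?_, hexs, ?_, ?_, ?_, hxcr_pos, hexcr, ?_, ?_, ?_, ?_⟩
  · simp [hfe, he_def, varianceFactor.apply_one (by positivity : c ^ 2 + d ^ 2 ≠ 0)]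
  · exact hfe ▸ (varianceFactor.strictMonoOn hc).comp (he.strictMonoOn _)
      fun x hx => ⟨Real.exp_pos _, hexs ▸ he.monotone hx.2⟩
  · exact hfe ▸ (varianceFactor.strictAntiOn hc hd).comp_strictMonoOn (he.strictMonoOn _)
      fun x hx => hexs ▸ he.monotone hx
  · exact hfe ▸ (varianceFactor.tendsto_atTop_zero hc.ne').comp
      (Real.tendsto_exp_atTop.comp (tendsto_id.const_mul_atTop hv))
  · rw [hfe, Function.comp_apply, hexcr, varianceFactor.apply_sq_div_sq hc.ne' hd.ne']
  · intro x hx hfx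
    exact he.injective <| hexcr ▸ varianceFactor.eq_sq_div_sq_of_eq_one hc.ne' (he_one x hx)
      (by rwa [hfe] at hfx)
  · intro x hx hlt
    exact hfe ▸ varianceFactor.one_lt hc.ne' (he_one x hx) (hexcr ▸ he hlt)
  · intro x hlt
    exact hfe ▸ varianceFactor.lt_one hc.ne' (he_one x (hxcr_pos.trans hlt)) (hexcr ▸ he hlt)
end
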